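/- Let z₁,…,zₙ ∈ ℝ^p be nonzero vectors and ρ: (0,∞) → ℝ continuous, nondecreasing, with ρ(eˣ) convex. Then the negative log-likelihood L₀(Σ) = Σᵢ ρ(zᵢᵀΣ⁻¹zᵢ) + (n/2) log det Σ is geodesically convex on S₊₊(p) with respect to the geodesics γ(t) = Σ₁^{1/2}(Σ₁^{-1/2}Σ₂Σ₁^{-1/2})^t Σ₁^{1/2}. -/

import Mathlib

/-!
Write `S₁^{-1/2} S₂ S₁^{-1/2} = V diag(μ) Vᵀ`. Then `γ(s)⁻¹ = S₁^{-1/2} V diag(μ^{-s}) Vᵀ S₁^{-1/2}`,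
so `s ↦ zᵀ γ(s)⁻¹ z = ∑ⱼ cⱼ μⱼ^{-s}` with `cⱼ ≥ 0` is a nonnegative combination of exponentials,
hence log-convex by Hölder's inequality. Since `ρ` is nondecreasing and `ρ ∘ exp` is convex,
`ρ` of a positive log-convex function is convex. Finally `log det γ(s) = log det S₁ + s ∑ⱼ log μⱼ`
is affine in `s`.
-/

open Matrix

noncomputable def mpow {p : ℕ} (A : Matrix (Fin p) (Fin p) ℝ) (t : ℝ) :
    Matrix (Fin p) (Fin p) ℝ :=
  if h : A.IsHermitian then
    (h.eigenvectorUnitary : Matrix (Fin p) (Fin p) ℝ) *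
      Matrix.diagonal (fun i => h.eigenvalues i ^ t) *
      (star (h.eigenvectorUnitary : Matrix (Fin p) (Fin p) ℝ))
  else A

/-- The geodesic `γ(t) = S1^{1/2} (S1^{-1/2} S2 S1^{-1/2})^t S1^{1/2}` on `S₊₊(p)`. -/
noncomputable def geo {p : ℕ} (A B : Matrix (Fin p) (Fin p) ℝ) (t : ℝ) :
    Matrix (Fin p) (Fin p) ℝ :=
  mpow A (1/2) * mpow (mpow A (-(1/2)) * B * mpow A (-(1/2))) t * mpow A (1/2)

open Real

lemma Real.sum_mul_rpow_le_rpow_mul_rpow {ι : Type*} (s : Finset ι) {c a : ι → ℝ}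
    (hc : ∀ i, 0 ≤ c i) (ha : ∀ i, 0 ≤ a i) {t : ℝ} (ht₀ : 0 < t) (ht₁ : t ≤ 1) :
    ∑ i ∈ s, c i * a i ^ t ≤ (∑ i ∈ s, c i) ^ (1 - t) * (∑ i ∈ s, c i * a i) ^ t := by
  have hölder := inner_le_weight_mul_Lp_of_nonneg s ((one_le_inv₀ ht₀).2 ht₁) c (a · ^ t) hc
    fun i => rpow_nonneg (ha i) t
  simpa only [← rpow_mul (ha _), mul_inv_cancel₀ ht₀.ne', rpow_one, inv_inv] using hölder

lemma MonotoneOn.le_of_convexOn_comp_exp {ρ : ℝ → ℝ} (hmono : MonotoneOn ρ (Set.Ioi 0))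
    (hconv : ConvexOn ℝ Set.univ (ρ ∘ exp)) {q x y t : ℝ} (hq : 0 < q) (hx : 0 < x) (hy : 0 < y)
    (ht₀ : 0 ≤ t) (ht₁ : t ≤ 1) (hqxy : q ≤ x ^ (1 - t) * y ^ t) :
    ρ q ≤ (1 - t) * ρ x + t * ρ y := by
  have hgeom : x ^ (1 - t) * y ^ t = exp ((1 - t) * log x + t * log y) := by
    rw [rpow_def_of_pos hx, rpow_def_of_pos hy, ← exp_add, mul_comm (log x), mul_comm (log y)]
  calc ρ q ≤ ρ (exp ((1 - t) * log x + t * log y)) :=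
        hmono hq (exp_pos _) (hgeom ▸ hqxy)
    _ ≤ (1 - t) * ρ (exp (log x)) + t * ρ (exp (log y)) :=
        hconv.2 trivial trivial (by linarith) ht₀ (by ring)
    _ = (1 - t) * ρ x + t * ρ y := by rw [exp_log hx, exp_log hy]

namespace Matrix

variable {p : ℕ} {A : Matrix (Fin p) (Fin p) ℝ}

lemma mpow_of_isHermitian (hA : A.IsHermitian) (t : ℝ) :
    mpow A t = (hA.eigenvectorUnitary : Matrix (Fin p) (Fin p) ℝ) *
      diagonal (fun i => hA.eigenvalues i ^ t) *
      star (hA.eigenvectorUnitary : Matrix (Fin p) (Fin p) ℝ) :=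
  dif_pos hA

lemma mpow_add (hA : A.PosDef) (s t : ℝ) : mpow A (s + t) = mpow A s * mpow A t := by
  simp only [mpow_of_isHermitian hA.1, Matrix.mul_assoc]
  rw [← Matrix.mul_assoc (star _) _ _, Unitary.coe_star_mul_self, Matrix.one_mul,
    ← Matrix.mul_assoc (diagonal _), diagonal_mul_diagonal]
  simp only [rpow_add (hA.eigenvalues_pos _)]

lemma mpow_zero (hA : A.IsHermitian) : mpow A 0 = 1 := by
  simp [mpow_of_isHermitian hA]

lemma mpow_one (hA : A.IsHermitian) : mpow A 1 = A := by
  simpa [mpow_of_isHermitian hA] using hA.spectral_theorem.symm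

lemma mpow_half_mul_mpow_half (hA : A.PosDef) : mpow A (1/2) * mpow A (1/2) = A := by
  rw [← mpow_add hA, add_halves, mpow_one hA.1]

lemma mpow_mul_mpow_neg (hA : A.PosDef) (t : ℝ) : mpow A t * mpow A (-t) = 1 := by
  rw [← mpow_add hA, add_neg_cancel, mpow_zero hA.1]

lemma mpow_neg_mul_mpow (hA : A.PosDef) (t : ℝ) : mpow A (-t) * mpow A t = 1 := by
  simpa using mpow_mul_mpow_neg hA (-t)

lemma mpow_mul_mpow_neg_cancel_left (hA : A.PosDef) (t : ℝ) (M : Matrix (Fin p) (Fin p) ℝ) :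
    mpow A t * (mpow A (-t) * M) = M := by
  rw [← Matrix.mul_assoc, mpow_mul_mpow_neg hA, Matrix.one_mul]

lemma isHermitian_mpow (hA : A.IsHermitian) (t : ℝ) : (mpow A t).IsHermitian := by
  rw [mpow_of_isHermitian hA, star_eq_conjTranspose]
  exact isHermitian_mul_mul_conjTranspose _ (isHermitian_diagonal _)

lemma det_mpow (hA : A.IsHermitian) (t : ℝ) :
    (mpow A t).det = ∏ i, hA.eigenvalues i ^ t := by
  rw [mpow_of_isHermitian hA, det_mul, det_mul, det_diagonal, mul_right_comm, ← det_mul,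
    Unitary.mul_star_self_of_mem hA.eigenvectorUnitary.2, det_one, one_mul]

lemma dotProduct_mpow_mulVec (hA : A.IsHermitian) (t : ℝ) (v : Fin p → ℝ) :
    v ⬝ᵥ mpow A t *ᵥ v = ∑ j, hA.eigenvalues j ^ t *
      (star (hA.eigenvectorUnitary : Matrix (Fin p) (Fin p) ℝ) *ᵥ v) j ^ 2 := by
  rw [mpow_of_isHermitian hA, ← mulVec_mulVec, ← mulVec_mulVec, dotProduct_mulVec,
    star_eq_conjTranspose, conjTranspose_eq_transpose_of_trivial, ← mulVec_transpose]
  simp only [dotProduct, mulVec_diagonal]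
  exact Finset.sum_congr rfl fun j _ => by ring

lemma dotProduct_mul_mul_mulVec {R l m n o : Type*} [CommSemiring R] [Fintype l] [Fintype m]
    [Fintype n] [Fintype o] (B : Matrix l m R) (N : Matrix m n R) (C : Matrix n o R)
    (w : l → R) (v : o → R) : w ⬝ᵥ (B * N * C) *ᵥ v = (Bᵀ *ᵥ w) ⬝ᵥ N *ᵥ (C *ᵥ v) := by
  rw [← mulVec_mulVec, ← mulVec_mulVec, dotProduct_mulVec, ← mulVec_transpose]

lemma PosDef.mpow_mul_mul_mpow {C : Matrix (Fin p) (Fin p) ℝ} (hA : A.PosDef) (hC : C.PosDef)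
    (t : ℝ) : (mpow A t * C * mpow A t).PosDef := by
  have hinj : Function.Injective (mpow A t).mulVec := fun x y hxy => by
    simpa [mulVec_mulVec, mpow_neg_mul_mpow hA]
      using congrArg (mpow A (-t) *ᵥ ·) hxy
  simpa only [(isHermitian_mpow hA.1 t).eq] using hC.conjTranspose_mul_mul_same hinj

lemma PosDef.mpow (hA : A.PosDef) (t : ℝ) : (mpow A t).PosDef := by
  simpa [← mpow_add hA] using hA.mpow_mul_mul_mpow PosDef.one (t / 2)

end Matrix

noncomputable def whitened {p : ℕ} (S1 S2 : Matrix (Fin p) (Fin p) ℝ) : Matrix (Fin p) (Fin p) ℝ :=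
  mpow S1 (-(1/2)) * S2 * mpow S1 (-(1/2))

section Geodesic

variable {p : ℕ} {S1 S2 : Matrix (Fin p) (Fin p) ℝ}

lemma geo_eq_whitened (S1 S2 : Matrix (Fin p) (Fin p) ℝ) (t : ℝ) :
    geo S1 S2 t = mpow S1 (1/2) * mpow (whitened S1 S2) t * mpow S1 (1/2) :=
  rfl

lemma posDef_whitened (hS1 : S1.PosDef) (hS2 : S2.PosDef) : (whitened S1 S2).PosDef :=
  hS1.mpow_mul_mul_mpow hS2 _

lemma posDef_geo (hS1 : S1.PosDef) (hS2 : S2.PosDef) (t : ℝ) : (geo S1 S2 t).PosDef :=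
  hS1.mpow_mul_mul_mpow ((posDef_whitened hS1 hS2).mpow t) _

lemma geo_zero (hS1 : S1.PosDef) (hS2 : S2.PosDef) : geo S1 S2 0 = S1 := by
  rw [geo_eq_whitened, mpow_zero (posDef_whitened hS1 hS2).1, Matrix.mul_one,
    mpow_half_mul_mpow_half hS1]

lemma geo_one (hS1 : S1.PosDef) (hS2 : S2.PosDef) : geo S1 S2 1 = S2 := by
  have h := mpow_mul_mpow_neg_cancel_left hS1 (1/2)
  rw [geo_eq_whitened, mpow_one (posDef_whitened hS1 hS2).1, whitened]
  simp only [Matrix.mul_assoc, h, mpow_neg_mul_mpow hS1, Matrix.mul_one]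

lemma inv_geo (hS1 : S1.PosDef) (hS2 : S2.PosDef) (t : ℝ) :
    (geo S1 S2 t)⁻¹ = mpow S1 (-(1/2)) * mpow (whitened S1 S2) (-t) * mpow S1 (-(1/2)) := by
  refine inv_eq_right_inv ?_
  simp only [geo_eq_whitened, Matrix.mul_assoc, mpow_mul_mpow_neg_cancel_left hS1,
    mpow_mul_mpow_neg_cancel_left (posDef_whitened hS1 hS2), mpow_mul_mpow_neg hS1]

lemma log_det_geo (hS1 : S1.PosDef) (hS2 : S2.PosDef) (t : ℝ) :
    log (geo S1 S2 t).det = (1 - t) * log S1.det + t * log S2.det := by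
  have hW := posDef_whitened hS1 hS2
  have hμ := hW.eigenvalues_pos
  have key : ∀ s, log (geo S1 S2 s).det = log S1.det + s * ∑ j, log (hW.1.eigenvalues j) := by
    intro s
    have hdet : (geo S1 S2 s).det = S1.det * ∏ j, hW.1.eigenvalues j ^ s := by
      rw [geo_eq_whitened, det_mul, det_mul, mul_right_comm, ← det_mul,
        mpow_half_mul_mpow_half hS1, det_mpow hW.1]
    rw [hdet, log_mul hS1.det_pos.ne' (Finset.prod_pos fun j _ => rpow_pos_of_pos (hμ j) s).ne',
      log_prod fun j _ => (rpow_pos_of_pos (hμ j) s).ne', Finset.mul_sum]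
    simp only [log_rpow (hμ _)]
  have h1 := key 1
  rw [geo_one hS1 hS2] at h1
  rw [key t]
  linear_combination (-t) * h1

lemma exists_dotProduct_inv_geo_mulVec_eq_sum (hS1 : S1.PosDef) (hS2 : S2.PosDef)
    (v : Fin p → ℝ) : ∃ c a : Fin p → ℝ, (∀ j, 0 ≤ c j) ∧ (∀ j, 0 ≤ a j) ∧
      ∀ s, v ⬝ᵥ (geo S1 S2 s)⁻¹ *ᵥ v = ∑ j, c j * a j ^ s := by
  have hW := posDef_whitened hS1 hS2
  have hB : (mpow S1 (-(1/2)))ᵀ = mpow S1 (-(1/2)) :=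
    (conjTranspose_eq_transpose_of_trivial _).symm.trans (isHermitian_mpow hS1.1 _).eq
  refine ⟨fun j => (star (hW.1.eigenvectorUnitary : Matrix (Fin p) (Fin p) ℝ) *ᵥ
      (mpow S1 (-(1/2)) *ᵥ v)) j ^ 2, fun j => (hW.1.eigenvalues j)⁻¹, fun j => sq_nonneg _,
    fun j => (inv_pos.2 (hW.eigenvalues_pos j)).le, fun s => ?_⟩
  rw [inv_geo hS1 hS2, dotProduct_mul_mul_mulVec, hB, dotProduct_mpow_mulVec hW.1]
  refine Finset.sum_congr rfl fun j _ => ?_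
  rw [inv_rpow (hW.eigenvalues_pos j).le, ← rpow_neg (hW.eigenvalues_pos j).le, mul_comm]

lemma dotProduct_inv_geo_mulVec_le (hS1 : S1.PosDef) (hS2 : S2.PosDef) (v : Fin p → ℝ) {t : ℝ}
    (ht₀ : 0 < t) (ht₁ : t ≤ 1) :
    v ⬝ᵥ (geo S1 S2 t)⁻¹ *ᵥ v ≤ (v ⬝ᵥ S1⁻¹ *ᵥ v) ^ (1 - t) * (v ⬝ᵥ S2⁻¹ *ᵥ v) ^ t := by
  obtain ⟨c, a, hc, ha, hsum⟩ := exists_dotProduct_inv_geo_mulVec_eq_sum hS1 hS2 v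
  have h0 := hsum 0
  have h1 := hsum 1
  rw [geo_zero hS1 hS2] at h0
  rw [geo_one hS1 hS2] at h1
  simp only [rpow_zero, mul_one] at h0
  simp only [rpow_one] at h1
  rw [hsum t, h0, h1]
  exact sum_mul_rpow_le_rpow_mul_rpow _ hc ha ht₀ ht₁

end Geodesic

theorem L0_geodesically_convex_general {p n : ℕ} (z : Fin n → Fin p → ℝ)
    (hz : ∀ i, z i ≠ 0) (ρ : ℝ → ℝ)
    (hmono : MonotoneOn ρ (Set.Ioi 0))
    (hconv : ConvexOn ℝ Set.univ (fun x : ℝ => ρ (Real.exp x))) :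
    ∀ (S1 S2 : Matrix (Fin p) (Fin p) ℝ), S1.PosDef → S2.PosDef →
      ∀ t ∈ Set.Ioo (0:ℝ) 1,
        (∑ i, ρ (z i ⬝ᵥ (geo S1 S2 t)⁻¹ *ᵥ z i)
            + (n / 2 : ℝ) * Real.log (geo S1 S2 t).det) ≤
          (1 - t) * (∑ i, ρ (z i ⬝ᵥ S1⁻¹ *ᵥ z i) + (n / 2 : ℝ) * Real.log S1.det)
            + t * (∑ i, ρ (z i ⬝ᵥ S2⁻¹ *ᵥ z i) + (n / 2 : ℝ) * Real.log S2.det) := by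
  intro S1 S2 hS1 hS2 t ⟨ht₀, ht₁⟩
  have hpos : ∀ {S : Matrix (Fin p) (Fin p) ℝ}, S.PosDef → ∀ i, 0 < z i ⬝ᵥ S⁻¹ *ᵥ z i :=
    fun hS i => by simpa using hS.inv.dotProduct_mulVec_pos (hz i)
  have hρ : ∀ i, ρ (z i ⬝ᵥ (geo S1 S2 t)⁻¹ *ᵥ z i) ≤
      (1 - t) * ρ (z i ⬝ᵥ S1⁻¹ *ᵥ z i) + t * ρ (z i ⬝ᵥ S2⁻¹ *ᵥ z i) := fun i =>
    hmono.le_of_convexOn_comp_exp hconv (hpos (posDef_geo hS1 hS2 t) i) (hpos hS1 i)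
      (hpos hS2 i) ht₀.le ht₁.le (dotProduct_inv_geo_mulVec_le hS1 hS2 (z i) ht₀ ht₁.le)
  have hsum := Finset.sum_le_sum fun i (_ : i ∈ Finset.univ) => hρ i
  rw [Finset.sum_add_distrib, ← Finset.mul_sum, ← Finset.mul_sum] at hsum
  rw [log_det_geo hS1 hS2 t]
  linear_combination hsum

theorem L0_geodesically_convex {p n : ℕ} (z : Fin n → Fin p → ℝ)
    (hz : ∀ i, z i ≠ 0) (ρ : ℝ → ℝ)
    (hcont : ContinuousOn ρ (Set.Ioi 0))
    (hmono : MonotoneOn ρ (Set.Ioi 0))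
    (hconv : ConvexOn ℝ Set.univ (fun x : ℝ => ρ (Real.exp x))) :
    ∀ (S1 S2 : Matrix (Fin p) (Fin p) ℝ), S1.PosDef → S2.PosDef →
      ∀ t ∈ Set.Ioo (0:ℝ) 1,
        (∑ i, ρ (z i ⬝ᵥ (geo S1 S2 t)⁻¹ *ᵥ z i)
            + (n / 2 : ℝ) * Real.log (geo S1 S2 t).det) ≤
          (1 - t) * (∑ i, ρ (z i ⬝ᵥ S1⁻¹ *ᵥ z i) + (n / 2 : ℝ) * Real.log S1.det)
            + t * (∑ i, ρ (z i ⬝ᵥ S2⁻¹ *ᵥ z i) + (n / 2 : ℝ) * Real.log S2.det) :=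
  L0_geodesically_convex_general z hz ρ hmono hconv
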